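/- The Teia potential update condition holds for a cryptic move: let (M,d) be a metric space, k ≥ 1, let s_1,…,s_k and a_1,…,a_k be points of M with s_j = a_j for every j ≠ 1, and let E_1,…,E_k ∈ ℝ. Let â_1 ∈ M be arbitrary and define â by â_1 at index 1 and â_j = a_j for j ≠ 1. Then Φ(s,â,E) − Φ(s,a,E) ≤ k·d(a_1,â_1). -/

import Mathlib

/-!
Off the open index `i₀` the servers sit on the adversary's points, so every `d(s_j, a_j)` and
every isolation index `α(s_j; a_j, ·)` with `j ≠ i₀` vanishes, and `Φ` only sees `x = s_{i₀}` and
`a = a_{i₀}`. Moving `a` to `b` changes the matching term by `k (d(x,b) − d(x,a))`, while by the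
triangle inequality `d(b,y) ≤ d(b,a) + d(a,y)` each `e_i`, hence `e_max`, grows by at most
`(d(x,a) − d(x,b) + d(a,b)) / 2`; the `2k` copies of `e_max` thus cancel the matching change up
to `k d(a,b)`.
-/

/-- The isolation index `α(p; q, r) = (d(p,q) + d(p,r) − d(q,r)) / 2`. -/
noncomputable def alpha {M : Type*} [MetricSpace M] (p q r : M) : ℝ :=
  (dist p q + dist p r - dist q r) / 2

/-- The Teia potential `Φ(s, a, E)`:
`Σ_{i<j} d(s_i,s_j) + k·Σ_i d(s_i,a_i) + 2·Σ_i (e_max − E_i)`,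
where `ε^i = Σ_j α(s_j; a_j, s_i)`, `e_i = E_i − ε^i`, and
`e_max = max_i e_i`. -/
noncomputable def teiaPhi {M : Type*} [MetricSpace M] {k : ℕ}
    (s a : Fin k → M) (E : Fin k → ℝ) : ℝ :=
  (∑ i : Fin k, ∑ j ∈ Finset.Ioi i, dist (s i) (s j))
    + k * ∑ i : Fin k, dist (s i) (a i)
    + 2 * ∑ i : Fin k,
        ((⨆ j : Fin k, (E j - ∑ l : Fin k, alpha (s l) (a l) (s j))) - E i)

section

variable {M : Type*} [MetricSpace M]

theorem alpha_self_left (p r : M) : alpha p p r = 0 := by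
  simp [alpha]

theorem alpha_sub_alpha_le (x a b y : M) :
    alpha x a y - alpha x b y ≤ (dist x a - dist x b + dist a b) / 2 := by
  have := dist_triangle b a y
  rw [dist_comm b a] at this
  simp only [alpha]
  linarith

theorem ciSup_sub_alpha_le {ι : Type*} [Finite ι] [Nonempty ι] (E : ι → ℝ) (x a b : M)
    (y : ι → M) :
    ⨆ j, (E j - alpha x b (y j))
      ≤ (⨆ j, (E j - alpha x a (y j))) + (dist x a - dist x b + dist a b) / 2 := by
  refine ciSup_le fun j => ?_
  have hle : E j - alpha x a (y j) ≤ ⨆ j, (E j - alpha x a (y j)) :=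
    le_ciSup (Finite.bddAbove_range fun j => E j - alpha x a (y j)) j
  linarith [alpha_sub_alpha_le x a b (y j)]

theorem teiaPhi_eq_of_eq_off {k : ℕ} (s a : Fin k → M) (E : Fin k → ℝ) (i₀ : Fin k)
    (h : ∀ j, j ≠ i₀ → s j = a j) :
    teiaPhi s a E = (∑ i : Fin k, ∑ j ∈ Finset.Ioi i, dist (s i) (s j))
      + k * dist (s i₀) (a i₀)
      + 2 * (k * (⨆ j, (E j - alpha (s i₀) (a i₀) (s j))) - ∑ j, E j) := by
  have hdist : ∑ j, dist (s j) (a j) = dist (s i₀) (a i₀) :=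
    Fintype.sum_eq_single i₀ fun j hj => by rw [h j hj, dist_self]
  have halpha : ∀ y, ∑ l, alpha (s l) (a l) y = alpha (s i₀) (a i₀) y := fun y =>
    Fintype.sum_eq_single i₀ fun j hj => by rw [h j hj, alpha_self_left]
  simp only [teiaPhi, hdist, halpha, Finset.sum_sub_distrib, Finset.sum_const,
    Finset.card_univ, Fintype.card_fin, nsmul_eq_mul]

end

/-- Update condition for a cryptic move: if the adversary relocates its (unique)
open server `a_1` to a new point `anew`, the Teia potential increases by at most
`k` times the adversary's cost. -/
theorem teiaPhi_cryptic_move {M : Type*} [MetricSpace M] {k : ℕ} (hk : 1 ≤ k)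
    (s a : Fin k → M) (E : Fin k → ℝ)
    (h : ∀ j : Fin k, j ≠ ⟨0, hk⟩ → s j = a j) (anew : M) :
    teiaPhi s (Function.update a ⟨0, hk⟩ anew) E - teiaPhi s a E
      ≤ k * dist (a ⟨0, hk⟩) anew := by
  set i₀ : Fin k := ⟨0, hk⟩
  have : Nonempty (Fin k) := ⟨i₀⟩
  have h' : ∀ j, j ≠ i₀ → s j = Function.update a i₀ anew j := fun j hj => by
    rw [Function.update_of_ne hj, h j hj]
  have hsup := ciSup_sub_alpha_le E (s i₀) (a i₀) anew s
  rw [teiaPhi_eq_of_eq_off s _ E i₀ h', teiaPhi_eq_of_eq_off s a E i₀ h,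
    Function.update_self]
  linarith [mul_le_mul_of_nonneg_left hsup (Nat.cast_nonneg k)]
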